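/- For every ε₁, ε₂ > 0, setting δ = ε₁ε₂²/2, the following holds: for every tournament T on n vertices with more than (1/24 - δ)n³ cyclic triangles, the set of vertices v with both d⁺(v) and d⁻(v) strictly between (n-1)/2 - ε₂n and (n-1)/2 + ε₂n has size greater than (1-ε₁)n. -/

import Mathlib

open scoped Classical

def IsTournament {V : Type*} (r : V → V → Prop) : Prop :=
  (∀ v, ¬ r v v) ∧ ∀ u v : V, u ≠ v → (r u v ↔ ¬ r v u)

noncomputable def cyclicTriangles (n : ℕ) (r : Fin n → Fin n → Prop) :
    Finset (Finset (Fin n)) :=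
  (Finset.powersetCard 3 (Finset.univ : Finset (Fin n))).filter
    (fun s => ∃ u v w, u ∈ s ∧ v ∈ s ∧ w ∈ s ∧ r u v ∧ r v w ∧ r w u)

/-!
Every 3-set that is not a cyclic triangle is transitive and has a unique source, so the number
of cyclic triangles is at most `C(n,3) - ∑ᵥ C(d⁺(v), 2)`. Writing `d⁺(v) = (n-1)/2 + xᵥ`, where
`∑ᵥ xᵥ = 0`, this bound is `(n³ - n)/24 - ½ ∑ᵥ xᵥ²`. More than `(1/24 - ε₁ε₂²/2)n³` cyclic
triangles therefore force `∑ᵥ xᵥ² < ε₁ε₂²n³`, so fewer than `ε₁n` vertices have `|xᵥ| ≥ ε₂n`.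
Every other vertex is balanced, because `d⁻(v) = n - 1 - d⁺(v)`.
-/

open Finset

lemma Finset.card_filter_le_nsmul_le_sum {α M : Type*} [AddCommMonoid M] [PartialOrder M]
    [IsOrderedAddMonoid M] (s : Finset α) (f : α → M) (c : M) [DecidablePred (c ≤ f ·)]
    (hf : ∀ a ∈ s, 0 ≤ f a) : #{a ∈ s | c ≤ f a} • c ≤ ∑ a ∈ s, f a :=
  calc #{a ∈ s | c ≤ f a} • c ≤ ∑ a ∈ s with c ≤ f a, f a :=
        card_nsmul_le_sum _ f c fun _ ha => (mem_filter.1 ha).2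
    _ ≤ ∑ a ∈ s, f a :=
        sum_le_sum_of_subset_of_nonneg (filter_subset _ s) fun a ha _ => hf a ha

lemma Nat.cast_choose_three_eq {K : Type*} [Field K] [CharZero K] (n : ℕ) :
    (n.choose 3 : K) = n * (n - 1) * (n - 2) / 6 := by
  induction n with
  | zero => norm_num
  | succ k ih =>
    rw [Nat.choose_succ_succ, Nat.cast_add, ih, Nat.cast_choose_two]
    push_cast
    ring

namespace IsTournament

variable {V : Type*} {r : V → V → Prop}

lemma ne_of_rel (hr : IsTournament r) {u v : V} (h : r u v) : u ≠ v := by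
  rintro rfl
  exact hr.1 u h

lemma asymm (hr : IsTournament r) {u v : V} (h : r u v) : ¬ r v u :=
  (hr.2 u v (hr.ne_of_rel h)).mp h

lemma rel_or_rel (hr : IsTournament r) {u v : V} (h : u ≠ v) : r u v ∨ r v u := by
  by_cases huv : r u v
  · exact .inl huv
  · exact .inr ((hr.2 v u h.symm).mpr huv)

lemma not_cyclic_insert [DecidableEq V] (hr : IsTournament r) {v : V} {s : Finset V}
    (hs : ∀ u ∈ s, r v u) (hcard : #s = 2) :
    ¬ ∃ a b c, a ∈ insert v s ∧ b ∈ insert v s ∧ c ∈ insert v s ∧ r a b ∧ r b c ∧ r c a := by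
  rintro ⟨a, b, c, ha, hb, hc, hab, hbc, hca⟩
  -- `v` has no in-neighbour in `insert v s`, so the whole cycle lies in `s`
  have head_mem : ∀ x y, x ∈ insert v s → y ∈ insert v s → r x y → y ∈ s := by
    intro x y hx hy hxy
    rcases mem_insert.1 hy with rfl | hy
    · rcases mem_insert.1 hx with rfl | hx
      · exact absurd hxy (hr.1 x)
      · exact absurd hxy (hr.asymm (hs x hx))
    · exact hy
  have hsub : ({a, b, c} : Finset V) ⊆ s := by
    simp only [insert_subset_iff, singleton_subset_iff]
    exact ⟨head_mem c a hc ha hca, head_mem a b ha hb hab, head_mem b c hb hc hbc⟩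
  have h3 : #({a, b, c} : Finset V) = 3 :=
    card_eq_three.2 ⟨a, b, c, hr.ne_of_rel hab, (hr.ne_of_rel hca).symm, hr.ne_of_rel hbc, rfl⟩
  have := card_le_card hsub
  omega

lemma eq_of_insert_eq_insert [DecidableEq V] (hr : IsTournament r) {v v' : V} {s s' : Finset V}
    (hs : ∀ u ∈ s, r v u) (hs' : ∀ u ∈ s', r v' u) (h : insert v s = insert v' s') :
    v = v' ∧ s = s' := by
  have hv : v ∉ s := fun hv => hr.1 v (hs v hv)
  have hv' : v' ∉ s' := fun hv => hr.1 v' (hs' v' hv)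
  have hvv : v = v' := by
    by_contra hne
    have h₁ : v ∈ s' := (mem_insert.1 (h ▸ mem_insert_self v s)).resolve_left hne
    have h₂ : v' ∈ s := (mem_insert.1 (h.symm ▸ mem_insert_self v' s')).resolve_left (Ne.symm hne)
    exact hr.asymm (hs v' h₂) (hs' v h₁)
  subst hvv
  refine ⟨rfl, ?_⟩
  rw [← erase_insert hv, h, erase_insert hv']

end IsTournament

section Degrees

variable {V : Type*} [Fintype V]

noncomputable def outdeg (r : V → V → Prop) (v : V) : ℕ := (univ.filter (fun u => r v u)).card

noncomputable def indeg (r : V → V → Prop) (v : V) : ℕ := (univ.filter (fun u => r u v)).card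

variable {r : V → V → Prop}

lemma IsTournament.outdeg_add_indeg (hr : IsTournament r) (v : V) :
    outdeg r v + indeg r v = Fintype.card V - 1 := by
  have hdisj : Disjoint (univ.filter (fun u => r v u)) (univ.filter (fun u => r u v)) :=
    disjoint_filter.2 fun u _ h => hr.asymm h
  have hunion : univ.filter (fun u => r v u) ∪ univ.filter (fun u => r u v) = univ.erase v := by
    ext u
    simp only [mem_union, mem_filter, mem_univ, true_and, mem_erase, and_true]
    exact ⟨fun h => h.elim (fun h => (hr.ne_of_rel h).symm) hr.ne_of_rel,
      fun h => hr.rel_or_rel (Ne.symm h)⟩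
  rw [outdeg, indeg, ← card_union_of_disjoint hdisj, hunion, card_erase_of_mem (mem_univ v),
    card_univ]

lemma IsTournament.cast_indeg (hr : IsTournament r) (v : V) :
    (indeg r v : ℝ) = Fintype.card V - 1 - outdeg r v := by
  have h := hr.outdeg_add_indeg v
  have hV : 0 < Fintype.card V := Fintype.card_pos_iff.2 ⟨v⟩
  rw [eq_sub_iff_add_eq, add_comm, ← Nat.cast_one, ← Nat.cast_sub hV, ← h]
  push_cast
  ring

lemma sum_indeg_eq_sum_outdeg (r : V → V → Prop) : ∑ v, indeg r v = ∑ v, outdeg r v := by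
  simp only [indeg, outdeg, card_filter]
  exact sum_comm

lemma IsTournament.sum_outdeg (hr : IsTournament r) :
    (∑ v, outdeg r v : ℝ) = Fintype.card V * (Fintype.card V - 1) / 2 := by
  have h : ∑ v, ((outdeg r v : ℝ) + indeg r v) = Fintype.card V * (Fintype.card V - 1) := by
    simp only [hr.cast_indeg, add_sub_cancel, sum_const, card_univ, nsmul_eq_mul]
  rw [sum_add_distrib, ← Nat.cast_sum (f := indeg r), sum_indeg_eq_sum_outdeg, Nat.cast_sum] at h
  linarith

end Degrees

lemma IsTournament.card_cyclicTriangles_add_sum_choose_le {n : ℕ} {r : Fin n → Fin n → Prop}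
    (hr : IsTournament r) :
    #(cyclicTriangles n r) + ∑ v, (outdeg r v).choose 2 ≤ n.choose 3 := by
  unfold cyclicTriangles
  -- a transitive triangle is determined by its source together with the other two vertices
  have htrans : ∑ v, (outdeg r v).choose 2 ≤ #{s ∈ powersetCard 3 univ |
      ¬ ∃ a b c, a ∈ s ∧ b ∈ s ∧ c ∈ s ∧ r a b ∧ r b c ∧ r c a} := by
    have hsigma : ∑ v, (outdeg r v).choose 2
        = #(univ.sigma fun v => (univ.filter (fun u => r v u)).powersetCard 2) := by
      simp [card_sigma, card_powersetCard, outdeg]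
    rw [hsigma]
    refine card_le_card_of_injOn (fun p => insert p.1 p.2) ?_ ?_
    · rintro ⟨v, s⟩ hp
      simp only [coe_sigma, Set.mem_sigma_iff, mem_coe, mem_univ, true_and, mem_powersetCard,
        subset_iff, mem_filter] at hp
      have hv : v ∉ s := fun hv => hr.1 v (hp.1 hv)
      simp only [coe_filter, Set.mem_ofPred_eq, mem_powersetCard, subset_univ, true_and]
      exact ⟨by rw [card_insert_of_notMem hv, hp.2], hr.not_cyclic_insert (fun u hu => hp.1 hu) hp.2⟩
    · rintro ⟨v, s⟩ hp ⟨v', s'⟩ hp' h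
      simp only [coe_sigma, Set.mem_sigma_iff, mem_coe, mem_univ, true_and, mem_powersetCard,
        subset_iff, mem_filter] at hp hp'
      obtain ⟨rfl, rfl⟩ := hr.eq_of_insert_eq_insert (fun u hu => hp.1 hu) (fun u hu => hp'.1 hu)
        (h : insert v s = insert v' s')
      rfl
  have hsplit := card_filter_add_card_filter_not (s := powersetCard 3 (univ : Finset (Fin n)))
    fun s => ∃ a b c, a ∈ s ∧ b ∈ s ∧ c ∈ s ∧ r a b ∧ r b c ∧ r c a
  rw [card_powersetCard, card_univ, Fintype.card_fin] at hsplit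
  omega

noncomputable def outdegSqDeviation {V : Type*} [Fintype V] (r : V → V → Prop) : ℝ :=
  ∑ v, ((outdeg r v : ℝ) - (Fintype.card V - 1) / 2) ^ 2

lemma IsTournament.sum_cast_choose_outdeg {V : Type*} [Fintype V] {r : V → V → Prop}
    (hr : IsTournament r) :
    ∑ v, ((outdeg r v).choose 2 : ℝ) = outdegSqDeviation r / 2
      + Fintype.card V * (Fintype.card V - 1) * (Fintype.card V - 2) / 4
      - Fintype.card V * (Fintype.card V - 1) ^ 2 / 8 := by
  set N : ℝ := (Fintype.card V : ℝ)
  have hpoint : ∀ v, ((outdeg r v).choose 2 : ℝ) = ((outdeg r v : ℝ) - (N - 1) / 2) ^ 2 / 2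
      + (N - 2) / 2 * outdeg r v - (N - 1) ^ 2 / 8 := fun v => by
    rw [Nat.cast_choose_two]
    ring
  simp only [hpoint, sum_sub_distrib, sum_add_distrib, ← sum_div, ← mul_sum, hr.sum_outdeg,
    sum_const, card_univ, nsmul_eq_mul, outdegSqDeviation]
  ring

lemma IsTournament.card_cyclicTriangles_add_outdegSqDeviation_le {n : ℕ}
    {r : Fin n → Fin n → Prop} (hr : IsTournament r) :
    (#(cyclicTriangles n r) : ℝ) + outdegSqDeviation r / 2 ≤ ((n : ℝ) ^ 3 - n) / 24 := by
  have h : (#(cyclicTriangles n r) : ℝ) + ∑ v, ((outdeg r v).choose 2 : ℝ) ≤ n.choose 3 := by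
    exact_mod_cast hr.card_cyclicTriangles_add_sum_choose_le
  rw [hr.sum_cast_choose_outdeg, Nat.cast_choose_three_eq, Fintype.card_fin] at h
  linarith

section Balanced

variable {V : Type*} [Fintype V] {r : V → V → Prop}

lemma IsTournament.balanced_of_abs_lt (hr : IsTournament r) {v : V} {t : ℝ}
    (h : |(outdeg r v : ℝ) - (Fintype.card V - 1) / 2| < t) :
    ((Fintype.card V : ℝ) - 1) / 2 - t < outdeg r v ∧
      (outdeg r v : ℝ) < ((Fintype.card V : ℝ) - 1) / 2 + t ∧
      ((Fintype.card V : ℝ) - 1) / 2 - t < indeg r v ∧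
      (indeg r v : ℝ) < ((Fintype.card V : ℝ) - 1) / 2 + t := by
  rw [hr.cast_indeg]
  obtain ⟨h₁, h₂⟩ := abs_lt.1 h
  refine ⟨?_, ?_, ?_, ?_⟩ <;> linarith

lemma IsTournament.card_sub_card_unbalanced_le (hr : IsTournament r) (t : ℝ) :
    (Fintype.card V : ℝ) - #{v | t ≤ |(outdeg r v : ℝ) - (Fintype.card V - 1) / 2|} ≤
      #{v | ((Fintype.card V : ℝ) - 1) / 2 - t < outdeg r v ∧
        (outdeg r v : ℝ) < ((Fintype.card V : ℝ) - 1) / 2 + t ∧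
        ((Fintype.card V : ℝ) - 1) / 2 - t < indeg r v ∧
        (indeg r v : ℝ) < ((Fintype.card V : ℝ) - 1) / 2 + t} := by
  have hsplit := card_filter_add_card_filter_not (s := (univ : Finset V))
    fun v => t ≤ |(outdeg r v : ℝ) - (Fintype.card V - 1) / 2|
  have hmono := card_le_card <| monotone_filter_right (univ : Finset V)
    fun v _ (h : ¬ t ≤ |(outdeg r v : ℝ) - (Fintype.card V - 1) / 2|) =>
      hr.balanced_of_abs_lt (not_le.1 h)
  rw [card_univ] at hsplit
  rw [sub_le_iff_le_add, ← Nat.cast_add, Nat.cast_le]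
  omega

lemma card_unbalanced_mul_le_outdegSqDeviation (r : V → V → Prop) {t : ℝ} (ht : 0 ≤ t) :
    #{v | t ≤ |(outdeg r v : ℝ) - (Fintype.card V - 1) / 2|} * t ^ 2 ≤ outdegSqDeviation r := by
  calc #{v | t ≤ |(outdeg r v : ℝ) - (Fintype.card V - 1) / 2|} * t ^ 2
      ≤ #{v | t ^ 2 ≤ ((outdeg r v : ℝ) - (Fintype.card V - 1) / 2) ^ 2} * t ^ 2 := by
        refine mul_le_mul_of_nonneg_right (Nat.cast_le.2 ?_) (sq_nonneg t)
        exact card_le_card <| monotone_filter_right univ fun v _ h => by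
          simpa only [sq_abs] using pow_le_pow_left₀ ht h 2
    _ ≤ outdegSqDeviation r := by
        simpa only [nsmul_eq_mul, outdegSqDeviation] using
          card_filter_le_nsmul_le_sum univ _ (t ^ 2) fun v _ => sq_nonneg _

end Balanced

theorem stmt4_general (ε₁ ε₂ : ℝ) (h2 : 0 < ε₂) (n : ℕ)
    (r : Fin n → Fin n → Prop) (hr : IsTournament r)
    (ht : ((1 : ℝ) / 24 - ε₁ * ε₂ ^ 2 / 2) * n ^ 3 < ((cyclicTriangles n r).card : ℝ)) :
    (1 - ε₁) * n <
      ((Finset.univ.filter (fun v : Fin n =>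
        ((n : ℝ) - 1) / 2 - ε₂ * n < ((Finset.univ.filter (fun u => r v u)).card : ℝ) ∧
        ((Finset.univ.filter (fun u => r v u)).card : ℝ) < ((n : ℝ) - 1) / 2 + ε₂ * n ∧
        ((n : ℝ) - 1) / 2 - ε₂ * n < ((Finset.univ.filter (fun u => r u v)).card : ℝ) ∧
        ((Finset.univ.filter (fun u => r u v)).card : ℝ) < ((n : ℝ) - 1) / 2 + ε₂ * n)).card : ℝ) := by
  have hcount := hr.card_cyclicTriangles_add_outdegSqDeviation_le
  have hn : (0 : ℝ) < n := by
    rcases Nat.eq_zero_or_pos n with rfl | hn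
    · simp [cyclicTriangles] at ht
    · exact_mod_cast hn
  have hdev : outdegSqDeviation r < ε₁ * n * (ε₂ * n) ^ 2 := by linarith
  have hunbalanced := card_unbalanced_mul_le_outdegSqDeviation r (mul_pos h2 hn).le
  have hbalanced := hr.card_sub_card_unbalanced_le (ε₂ * n)
  simp only [Fintype.card_fin] at hunbalanced hbalanced
  have hfew : (#{v : Fin n | ε₂ * n ≤ |(outdeg r v : ℝ) - (n - 1) / 2|} : ℝ) < ε₁ * n :=
    lt_of_mul_lt_mul_right (hunbalanced.trans_lt hdev) (by positivity)
  refine lt_of_lt_of_le ?_ hbalanced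
  linarith

/-- Lemma 3.6: with `δ = ε₁ε₂²/2`, every `n`-vertex tournament with more than
`(1/24 - δ)n³` cyclic triangles has more than `(1-ε₁)n` vertices whose out- and
in-degrees both lie strictly between `(n-1)/2 - ε₂n` and `(n-1)/2 + ε₂n`. -/
theorem stmt4 (ε₁ ε₂ : ℝ) (h1 : 0 < ε₁) (h2 : 0 < ε₂) (n : ℕ)
    (r : Fin n → Fin n → Prop) (hr : IsTournament r)
    (ht : ((1 : ℝ) / 24 - ε₁ * ε₂ ^ 2 / 2) * n ^ 3 < ((cyclicTriangles n r).card : ℝ)) :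
    (1 - ε₁) * n <
      ((Finset.univ.filter (fun v : Fin n =>
        ((n : ℝ) - 1) / 2 - ε₂ * n < ((Finset.univ.filter (fun u => r v u)).card : ℝ) ∧
        ((Finset.univ.filter (fun u => r v u)).card : ℝ) < ((n : ℝ) - 1) / 2 + ε₂ * n ∧
        ((n : ℝ) - 1) / 2 - ε₂ * n < ((Finset.univ.filter (fun u => r u v)).card : ℝ) ∧
        ((Finset.univ.filter (fun u => r u v)).card : ℝ) < ((n : ℝ) - 1) / 2 + ε₂ * n)).card : ℝ) :=
  stmt4_general ε₁ ε₂ h2 n r hr ht
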